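/- Let κ > 0 and let c ∈ ℂ be the constant for which ∫₀^x exp(i t^{1+1/κ}) dt − exp(i x^{1+1/κ})/( i (1+1/κ) x^{1/κ} ) → c as x → ∞. Then lim_{x→∞} x^{1/κ} · | ∫₀^x exp(i t^{1+1/κ}) dt − c | = κ/(κ+1). In particular, ∫₀^x exp(i t^{1+1/κ}) dt − c is not o(x^{−1/κ}). -/

import Mathlib

/-!
Write `r = 1/κ`. Integrating by parts twice gives
`∫₀ˣ e^{i t^{1+r}} dt = c + e^{i x^{1+r}} / (i (1+r) x^r) + O(x^{-(2r+1)})`: after the second step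
the remaining integrand is `O(t^{-(2r+2)})`, so its tail beyond `x` is `O(x^{-(2r+1)}) = o(x^{-r})`.
The boundary term has modulus exactly `x^{-r}/(1+r)`, hence `x^r |∫₀ˣ - c| → 1/(1+r) = κ/(κ+1)`,
and this nonzero limit rules out `o(x^{-r})`.
-/

open MeasureTheory Set Filter Topology Asymptotics

section RpowDecay

variable {E : Type*} [NormedAddCommGroup E]

lemma Asymptotics.IsLittleO.tendsto_rpow_mul_norm {f : ℝ → E} {p : ℝ}
    (h : f =o[atTop] fun x => x ^ (-p)) :
    Tendsto (fun x => x ^ p * ‖f x‖) atTop (𝓝 0) := by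
  refine h.norm_left.tendsto_div_nhds_zero.congr' ?_
  filter_upwards [eventually_gt_atTop 0] with x hx
  rw [Real.rpow_neg hx.le, div_inv_eq_mul, mul_comm]

lemma tendsto_rpow_mul_norm_of_norm_eq {f g : ℝ → E} {p L : ℝ}
    (hfg : Tendsto (fun x => x ^ p * ‖f x - g x‖) atTop (𝓝 0))
    (hg : ∀ᶠ x in atTop, ‖g x‖ = L * x ^ (-p)) :
    Tendsto (fun x => x ^ p * ‖f x‖) atTop (𝓝 L) := by
  rw [tendsto_iff_norm_sub_tendsto_zero]
  refine squeeze_zero' (Eventually.of_forall fun _ => norm_nonneg _) ?_ hfg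
  filter_upwards [hg, eventually_gt_atTop 0] with x hgx hx
  have hpx : x ^ p * x ^ (-p) = 1 := by
    rw [← Real.rpow_add hx, add_neg_cancel, Real.rpow_zero]
  have hsplit : x ^ p * ‖f x‖ - L = x ^ p * (‖f x‖ - ‖g x‖) := by
    rw [hgx, mul_sub, mul_left_comm, hpx, mul_one]
  rw [hsplit, norm_mul, Real.norm_of_nonneg (Real.rpow_nonneg hx.le p)]
  gcongr
  exact abs_norm_sub_norm_le _ _

lemma norm_sub_le_of_tendsto_of_norm_deriv_le_rpow [NormedSpace ℝ E] {f f' : ℝ → E} {c : E}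
    {a p C : ℝ} (ha : 0 < a) (hp : 0 < p) (hf : ∀ t, a ≤ t → HasDerivAt f (f' t) t)
    (hf' : ∀ t, a ≤ t → ‖f' t‖ ≤ C * t ^ (-(p + 1))) (hc : Tendsto f atTop (𝓝 c)) :
    ‖f a - c‖ ≤ C / p * a ^ (-p) := by
  have hC : 0 ≤ C :=
    nonneg_of_mul_nonneg_left ((norm_nonneg _).trans (hf' a le_rfl)) (by positivity)
  have hB : ∀ t, 0 < t →
      HasDerivAt (fun t => C / p * (a ^ (-p) - t ^ (-p))) (C * t ^ (-(p + 1))) t := by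
    intro t ht
    refine (((hasDerivAt_const t _).sub
      (Real.hasDerivAt_rpow_const (p := -p) (Or.inl ht.ne'))).const_mul (C / p)).congr_deriv ?_
    rw [show -p - 1 = -(p + 1) by ring]
    field_simp
    ring
  have hfence : ∀ y, a ≤ y → ‖f y - f a‖ ≤ C / p * a ^ (-p) := by
    intro y hy
    refine (image_norm_le_of_norm_deriv_right_le_deriv_boundary'
      (f := fun t => f t - f a) (a := a) (b := y)
      (fun t ht => ((hf t ht.1).sub_const (f a)).continuousAt.continuousWithinAt)
      (fun t ht => ((hf t ht.1).sub_const (f a)).hasDerivWithinAt)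
      (by simp) (fun t ht => (hB t (ha.trans_le ht.1)).continuousAt.continuousWithinAt)
      (fun t ht => (hB t (ha.trans_le ht.1)).hasDerivWithinAt) (fun t ht => hf' t ht.1)
      ⟨hy, le_rfl⟩).trans ?_
    exact mul_le_mul_of_nonneg_left (sub_le_self _ (Real.rpow_nonneg (ha.le.trans hy) _))
      (by positivity)
  rw [norm_sub_rev]
  exact le_of_tendsto ((hc.sub_const (f a)).norm) (eventually_ge_atTop a |>.mono hfence)

end RpowDecay

noncomputable section Chirp

open Complex

def chirp (r t : ℝ) : ℂ := exp (I * ↑(t ^ (1 + r)))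

/-- The integral minus the boundary term of one integration by parts; `x^{-r}` agrees with
`1/x^r` for `x > 0`. -/
def chirpCorrected (r x : ℝ) : ℂ :=
  (∫ t in (0 : ℝ)..x, chirp r t) - (I * (1 + r))⁻¹ * (↑(x ^ (-r)) * chirp r x)

lemma norm_chirp (r t : ℝ) : ‖chirp r t‖ = 1 := by
  simp [chirp, norm_exp]

lemma norm_rpow_mul_chirp (r s : ℝ) {t : ℝ} (ht : 0 ≤ t) :
    ‖((t ^ s : ℝ) : ℂ) * chirp r t‖ = t ^ s := by
  rw [norm_mul, norm_chirp, mul_one, norm_real, Real.norm_of_nonneg (Real.rpow_nonneg ht s)]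

lemma norm_I_mul_one_add {r : ℝ} (hr : 0 ≤ 1 + r) : ‖I * (1 + (r : ℂ))‖ = 1 + r := by
  rw [norm_mul, norm_I, one_mul, ← ofReal_one, ← ofReal_add, norm_real, Real.norm_of_nonneg hr]

lemma continuous_chirp {r : ℝ} (hr : 0 ≤ 1 + r) : Continuous (chirp r) :=
  continuous_exp.comp <|
    continuous_const.mul (continuous_ofReal.comp (Real.continuous_rpow_const hr))

lemma tendsto_rpow_mul_chirp_atTop (r : ℝ) {s : ℝ} (hs : s < 0) :
    Tendsto (fun t => ((t ^ s : ℝ) : ℂ) * chirp r t) atTop (𝓝 0) := by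
  rw [tendsto_zero_iff_norm_tendsto_zero]
  refine (tendsto_rpow_neg_atTop (y := -s) (by linarith)).congr' ?_
  filter_upwards [eventually_ge_atTop 0] with t ht
  rw [neg_neg, norm_rpow_mul_chirp r s ht]

lemma hasDerivAt_rpow_mul_chirp (r s : ℝ) {x : ℝ} (hx : 0 < x) :
    HasDerivAt (fun t => ((t ^ s : ℝ) : ℂ) * chirp r t)
      (s * ↑(x ^ (s - 1)) * chirp r x + I * (1 + r) * (↑(x ^ (s + r)) * chirp r x)) x := by
  have hpow : HasDerivAt (fun t : ℝ => t ^ (1 + r)) ((1 + r) * x ^ r) x := by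
    simpa using Real.hasDerivAt_rpow_const (x := x) (p := 1 + r) (Or.inl hx.ne')
  have hchirp := (hpow.ofReal_comp.const_mul I).cexp
  refine ((Real.hasDerivAt_rpow_const (p := s) (Or.inl hx.ne')).ofReal_comp.mul
    hchirp).congr_deriv ?_
  rw [Real.rpow_add hx s r]
  simp only [chirp]
  push_cast
  ring

/-- One integration by parts: up to a multiple of `t^{s-r-1} e^{i t^{1+r}}`, the derivative of
`t^{s-r} e^{i t^{1+r}} / (i(1+r))` is `t^s e^{i t^{1+r}}`. -/
lemma HasDerivAt.sub_rpow_mul_chirp {r s : ℝ} (hr : 1 + r ≠ 0) {F : ℝ → ℂ} {w : ℂ} {x : ℝ}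
    (hx : 0 < x) (hF : HasDerivAt F (w * (↑(x ^ s) * chirp r x)) x) :
    HasDerivAt (fun t => F t - w * (I * (1 + r))⁻¹ * (↑(t ^ (s - r)) * chirp r t))
      ((r - s) * w * (I * (1 + r))⁻¹ * (↑(x ^ (s - r - 1)) * chirp r x)) x := by
  have hr' : (1 + r : ℂ) ≠ 0 := by exact_mod_cast hr
  refine (hF.sub ((hasDerivAt_rpow_mul_chirp r (s - r) hx).const_mul _)).congr_deriv ?_
  rw [sub_add_cancel]
  field_simp
  push_cast
  ring

lemma hasDerivAt_chirpCorrected {r x : ℝ} (hr : -1 < r) (hx : 0 < x) :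
    HasDerivAt (chirpCorrected r) (r * (I * (1 + r))⁻¹ * (↑(x ^ (-r - 1)) * chirp r x)) x := by
  have hint : HasDerivAt (fun x => ∫ t in (0 : ℝ)..x, chirp r t)
      (1 * (↑(x ^ (0 : ℝ)) * chirp r x)) x := by
    have hcont := continuous_chirp (r := r) (by linarith)
    simpa using intervalIntegral.integral_hasDerivAt_right (hcont.intervalIntegrable _ _)
      hcont.stronglyMeasurable.stronglyMeasurableAtFilter hcont.continuousAt
  convert hint.sub_rpow_mul_chirp (by linarith) hx using 1
  · ext t; simp [chirpCorrected]
  · simp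

lemma hasDerivAt_chirpCorrected_sub {r x : ℝ} (hr : -1 < r) (hx : 0 < x) :
    HasDerivAt
      (fun t => chirpCorrected r t - r * (I * (1 + r))⁻¹ ^ 2 * (↑(t ^ (-(2 * r + 1))) * chirp r t))
      (((2 * r + 1 : ℝ) : ℂ) * (r * (I * (1 + r))⁻¹ ^ 2) *
        (↑(x ^ (-(2 * r + 1 + 1))) * chirp r x)) x := by
  have h := (hasDerivAt_chirpCorrected hr hx).sub_rpow_mul_chirp (by linarith) hx
  rw [show -r - 1 - r = -(2 * r + 1) by ring, show -(2 * r + 1) - 1 = -(2 * r + 1 + 1) by ring] at h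
  convert h using 2 <;> push_cast <;> ring

lemma norm_chirpCorrected_sub_le {r x : ℝ} {c : ℂ} (hr : 0 < r)
    (hc : Tendsto (chirpCorrected r) atTop (𝓝 c)) (hx : 0 < x) :
    ‖chirpCorrected r x - c‖ ≤ 2 * r / (1 + r) ^ 2 * x ^ (-(2 * r + 1)) := by
  have hnorm_w : ‖(r : ℂ) * (I * (1 + r))⁻¹ ^ 2‖ = r / (1 + r) ^ 2 := by
    rw [norm_mul, norm_pow, norm_inv, norm_I_mul_one_add (by linarith), norm_real,
      Real.norm_of_nonneg hr.le, inv_pow, div_eq_mul_inv]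
  have hlim : Tendsto
      (fun t => chirpCorrected r t - r * (I * (1 + r))⁻¹ ^ 2 * (↑(t ^ (-(2 * r + 1))) * chirp r t))
      atTop (𝓝 c) := by
    simpa using hc.sub ((tendsto_rpow_mul_chirp_atTop r (by linarith)).const_mul _)
  have htail := norm_sub_le_of_tendsto_of_norm_deriv_le_rpow hx (by linarith : 0 < 2 * r + 1)
    (fun t ht => hasDerivAt_chirpCorrected_sub (by linarith) (hx.trans_le ht))
    (C := (2 * r + 1) * (r / (1 + r) ^ 2)) ?_ hlim
  · have hC : (2 * r + 1) * (r / (1 + r) ^ 2) / (2 * r + 1) = r / (1 + r) ^ 2 := by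
      field_simp
    rw [hC] at htail
    calc ‖chirpCorrected r x - c‖
        ≤ ‖chirpCorrected r x - r * (I * (1 + r))⁻¹ ^ 2 * (↑(x ^ (-(2 * r + 1))) * chirp r x) - c‖
          + ‖r * (I * (1 + r))⁻¹ ^ 2 * (↑(x ^ (-(2 * r + 1))) * chirp r x)‖ := by
          refine (norm_add_le _ _).trans_eq' (congrArg norm ?_)
          ring
      _ ≤ 2 * r / (1 + r) ^ 2 * x ^ (-(2 * r + 1)) := by
          rw [norm_mul, norm_rpow_mul_chirp r _ hx.le, hnorm_w]
          linarith [show 2 * r / (1 + r) ^ 2 * x ^ (-(2 * r + 1))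
            = 2 * (r / (1 + r) ^ 2 * x ^ (-(2 * r + 1))) by ring]
  · intro t ht
    rw [norm_mul, norm_mul, norm_rpow_mul_chirp r _ (hx.le.trans ht), hnorm_w, norm_real,
      Real.norm_of_nonneg (by linarith)]

lemma tendsto_rpow_mul_norm_integral_chirp_sub {r : ℝ} {c : ℂ} (hr : 0 < r)
    (hc : Tendsto (chirpCorrected r) atTop (𝓝 c)) :
    Tendsto (fun x => x ^ r * ‖(∫ t in (0 : ℝ)..x, chirp r t) - c‖) atTop (𝓝 (1 / (1 + r))) := by
  refine tendsto_rpow_mul_norm_of_norm_eq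
    (g := fun x => (I * (1 + r))⁻¹ * (↑(x ^ (-r)) * chirp r x)) ?_ ?_
  · refine squeeze_zero' ((eventually_ge_atTop 0).mono fun x hx => by positivity) ?_
      (by simpa only [mul_zero] using
        (tendsto_rpow_neg_atTop (y := r + 1) (by positivity)).const_mul (2 * r / (1 + r) ^ 2))
    filter_upwards [eventually_gt_atTop 0] with x hx
    have hsub : (∫ t in (0 : ℝ)..x, chirp r t) - c - (I * (1 + r))⁻¹ * (↑(x ^ (-r)) * chirp r x)
        = chirpCorrected r x - c := by
      rw [chirpCorrected]; ring
    calc x ^ r * ‖(∫ t in (0 : ℝ)..x, chirp r t) - c - (I * (1 + r))⁻¹ * (↑(x ^ (-r)) * chirp r x)‖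
        ≤ x ^ r * (2 * r / (1 + r) ^ 2 * x ^ (-(2 * r + 1))) := by
          rw [hsub]
          gcongr
          exact norm_chirpCorrected_sub_le hr hc hx
      _ = 2 * r / (1 + r) ^ 2 * x ^ (-(r + 1)) := by
          rw [mul_left_comm, ← Real.rpow_add hx]
          ring_nf
  · filter_upwards [eventually_ge_atTop 0] with x hx
    rw [norm_mul, norm_inv, norm_I_mul_one_add (by linarith), norm_rpow_mul_chirp r _ hx, one_div]

end Chirp

/-- Optimality: `x^{1/κ} |∫₀ˣ exp(i t^{1+1/κ}) dt − c| → κ/(κ+1)`; in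
particular `∫₀ˣ exp(i t^{1+1/κ}) dt − c` is not `o(x^{−1/κ})`. -/
theorem stmt_11 (κ : ℝ) (hκ : 0 < κ) (c : ℂ)
    (hc : Tendsto (fun x : ℝ =>
        (∫ t in (0:ℝ)..x, Complex.exp (Complex.I * (↑(t ^ (1 + 1/κ)) : ℂ))) -
          Complex.exp (Complex.I * (↑(x ^ (1 + 1/κ)) : ℂ)) /
            (Complex.I * (1 + 1/(κ:ℂ)) * (↑(x ^ (1/κ)) : ℂ)))
      atTop (nhds c)) :
    Tendsto (fun x : ℝ => x ^ (1/κ) *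
        ‖(∫ t in (0:ℝ)..x, Complex.exp (Complex.I * (↑(t ^ (1 + 1/κ)) : ℂ))) - c‖)
      atTop (nhds (κ / (κ + 1))) ∧
    ¬ Asymptotics.IsLittleO atTop
        (fun x : ℝ =>
          (∫ t in (0:ℝ)..x, Complex.exp (Complex.I * (↑(t ^ (1 + 1/κ)) : ℂ))) - c)
        (fun x : ℝ => x ^ (-(1/κ))) := by
  have hr : 0 < 1 / κ := by positivity
  have hc' : Tendsto (chirpCorrected (1 / κ)) atTop (𝓝 c) := by
    refine hc.congr' ?_
    filter_upwards [eventually_gt_atTop 0] with x hx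
    rw [chirpCorrected, Real.rpow_neg hx.le]
    push_cast
    simp only [chirp]
    field_simp
  have hlim := tendsto_rpow_mul_norm_integral_chirp_sub hr hc'
  rw [show 1 / (1 + 1 / κ) = κ / (κ + 1) by field_simp] at hlim
  refine ⟨hlim, fun hO => ?_⟩
  have hzero := tendsto_nhds_unique hlim hO.tendsto_rpow_mul_norm
  exact (by positivity : κ / (κ + 1) ≠ 0) hzero
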